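/- arXiv:math/0701282 — 4 statements merged into one kernel-verified Lean document; each statement's English description precedes it below -/
import Mathlib

section
/- If a path v in Q is derived of a path u of order t and v is also derived of u of order t', then t = t'. -/
attribute [local instance] Classical.propDecidable

/-- A quiver given by a set of vertices, a set of arrows and source/target maps. -/
structure Quiv where
  V : Type
  A : Type
  s : A → V
  t : A → V

namespace Quiv

section Basic

variable (Q : Quiv)

/-- A (nontrivial) path is a nonempty list of composable arrows, listed in the
order they are traversed. -/
def IsPath (p : List Q.A) : Prop :=
  p ≠ [] ∧ p.Chain' (fun a b => Q.t a = Q.s b)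

/-- Source of a nonempty list of arrows. -/
def src (p : List Q.A) : Option Q.V := p.head?.map Q.s

/-- Target of a nonempty list of arrows. -/
def tgt (p : List Q.A) : Option Q.V := p.getLast?.map Q.t

/-- `Q` has no oriented cycle: no nontrivial path has equal source and target. -/
def NoCycle : Prop := ∀ p, Q.IsPath p → Q.src p ≠ Q.tgt p

/-- `Q` has no multiple arrows: distinct arrows never have both the same source
and the same target. -/
def NoMultipleArrows : Prop :=
  ∀ a b : Q.A, Q.s a = Q.s b → Q.t a = Q.t b → a = b

/-- A bypass `(α, u)`: `u` is a path parallel to the arrow `α` and distinct from it. -/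
def IsBypass (α : Q.A) (u : List Q.A) : Prop :=
  Q.IsPath u ∧ Q.src u = some (Q.s α) ∧ Q.tgt u = some (Q.t α) ∧ u ≠ [α]

/-- `Repl n u v` : `v` is obtained from `u` by replacing `n` of its arrows (at
increasing positions) by bypass paths. -/
inductive Repl : ℕ → List Q.A → List Q.A → Prop
  | nil : Repl 0 [] []
  | keep (a : Q.A) {n : ℕ} {u v : List Q.A} : Repl n u v → Repl n (a :: u) (a :: v)
  | repl {a : Q.A} {p : List Q.A} {n : ℕ} {u v : List Q.A} :
      Q.IsBypass a p → Repl n u v → Repl (n + 1) (a :: u) (p ++ v)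

/-- `v` is derived of `u` of order `t`. -/
def DerivedOfOrder (t : ℕ) (u v : List Q.A) : Prop := 1 ≤ t ∧ Q.Repl t u v

/-- `v` is derived of `u` (of some order `t ≥ 1`). -/
def Derived (u v : List Q.A) : Prop := ∃ t, Q.DerivedOfOrder t u v

/-- `W(α)` : the number of bypasses of the form `(α, u)`. -/
noncomputable def Wa (α : Q.A) : ℕ := Nat.card {u : List Q.A // Q.IsBypass α u}

/-- `W(u)` for a path `u = α_n ⋯ α_1` : the sum of the `W(α_i)`. -/
noncomputable def Wp (u : List Q.A) : ℕ := (u.map Q.Wa).sum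

/-- A linear order `<` on the nontrivial paths of `Q` refining the `W`-ordering and
compatible with concatenation, as in Le Meur's Definition 2.5. -/
structure PathOrder where
  lt : List Q.A → List Q.A → Prop
  irrefl : ∀ p, Q.IsPath p → ¬ lt p p
  trans' : ∀ p q r, lt p q → lt q r → lt p r
  total' : ∀ p q, Q.IsPath p → Q.IsPath q → p ≠ q → lt p q ∨ lt q p
  wlt : ∀ p q, Q.IsPath p → Q.IsPath q → Q.Wp p < Q.Wp q → lt p q
  concat : ∀ u u' v v' : List Q.A, lt v u → lt v' u' →
    Q.IsPath (v ++ v') → Q.IsPath (u ++ u') → lt (v ++ v') (u ++ u')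

end Basic

/-- Lexicographic (strict) order on bypasses: `(α,u) < (β,v)` iff `α < β`, or
`α = β` and `u < v`. -/
def PathOrder.bplt {Q : Quiv} (o : Q.PathOrder) (b c : Q.A × List Q.A) : Prop :=
  o.lt [b.1] [c.1] ∨ (b.1 = c.1 ∧ o.lt b.2 c.2)

/-- Lexicographic non-strict order on bypasses. -/
def PathOrder.bple {Q : Quiv} (o : Q.PathOrder) (b c : Q.A × List Q.A) : Prop :=
  o.bplt b c ∨ b = c

section Linear

variable (Q : Quiv) (k : Type) [Field k]

/-- Concatenation product on the free `k`-module on lists of arrows (the morphism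
spaces of the path category `kQ`). -/
noncomputable def mulF (f g : List Q.A →₀ k) : List Q.A →₀ k :=
  f.sum fun p c => g.sum fun q d => Finsupp.single (p ++ q) (c * d)

/-- Image of the arrow `a` under the transvection `φ_{α,u,τ}`. -/
noncomputable def arrowImg (α : Q.A) (u : List Q.A) (τ : k) (a : Q.A) : List Q.A →₀ k :=
  if a = α then Finsupp.single [a] 1 + τ • Finsupp.single u 1 else Finsupp.single [a] 1

/-- Image of a path under the transvection `φ_{α,u,τ}`. -/
noncomputable def substPoly (α : Q.A) (u : List Q.A) (τ : k) : List Q.A → (List Q.A →₀ k)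
  | [] => Finsupp.single [] 1
  | a :: rest => mulF Q k (arrowImg Q k α u τ a) (substPoly α u τ rest)

/-- The transvection `φ_{α,u,τ}` as a linear endomorphism of `kQ` : it is the
`k`-linear automorphism of `kQ` fixing every vertex, sending `α` to `α + τ u`, and
fixing every other arrow. -/
noncomputable def substMap (α : Q.A) (u : List Q.A) (τ : k) :
    Module.End k (List Q.A →₀ k) :=
  Finsupp.linearCombination k (substPoly Q k α u τ)

/-- `ψ` lies in the group `T` generated by the transvections, i.e. it is a finite
product of transvections. -/
def MemT (ψ : Module.End k (List Q.A →₀ k)) : Prop :=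
  ∃ L : List (Q.A × List Q.A × k),
    (∀ x ∈ L, Q.IsBypass x.1 x.2.1) ∧
    ψ = (L.map fun x => substMap Q k x.1 x.2.1 x.2.2).prod

/-- `r'` is a subexpression of `r`. -/
def Subexpr (r' r : List Q.A →₀ k) : Prop :=
  r'.support ⊆ r.support ∧ ∀ p ∈ r'.support, r' p = r p

/-- A minimal relation of `I` : a nonzero `r ∈ I` such that `0` and `r` are the only
subexpressions of `r` lying in `I`. -/
def IsMinimalRel (I : Submodule k (List Q.A →₀ k)) (r : List Q.A →₀ k) : Prop :=
  r ∈ I ∧ r ≠ 0 ∧ ∀ r', Subexpr Q k r' r → r' ∈ I → r' = 0 ∨ r' = r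

/-- `ReplExp g u v c` : `v` is obtained from the path `u` by replacing some of its
arrows `a` (at increasing positions) by paths `w ∈ supp(g a)`, `w ≠ a`, and `c` is
the product of the corresponding coefficients `w^*(g a)`. -/
inductive ReplExp (g : Q.A → (List Q.A →₀ k)) : List Q.A → List Q.A → k → Prop
  | nil : ReplExp g [] [] 1
  | keep (a : Q.A) {u v : List Q.A} {c : k} :
      ReplExp g u v c → ReplExp g (a :: u) (a :: v) c
  | repl (a : Q.A) {w u v : List Q.A} {c : k} :
      w ∈ (g a).support → w ≠ [a] → ReplExp g u v c →
      ReplExp g (a :: u) (w ++ v) ((g a) w * c)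

/-- The homotopy relation `∼_I` on walks. A walk is a list of pairs `(a, d)` where
`a` is an arrow and `d` is `true` for `a` and `false` for the formal inverse `a⁻¹`;
the relation is the smallest equivalence relation compatible with concatenation,
cancelling `a a⁻¹` and `a⁻¹ a`, and identifying any two paths lying in the support
of a minimal relation of `I`. -/
inductive Homotopic (I : Submodule k (List Q.A →₀ k)) :
    List (Q.A × Bool) → List (Q.A × Bool) → Prop
  | refl (w : List (Q.A × Bool)) : Homotopic I w w
  | symm {w w' : List (Q.A × Bool)} : Homotopic I w w' → Homotopic I w' w
  | trans {w w' w'' : List (Q.A × Bool)} :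
      Homotopic I w w' → Homotopic I w' w'' → Homotopic I w w''
  | cancel (a : Q.A) : Homotopic I [(a, true), (a, false)] []
  | cancel' (a : Q.A) : Homotopic I [(a, false), (a, true)] []
  | rel {r : List Q.A →₀ k} (hr : IsMinimalRel Q k I r) {u v : List Q.A}
      (hu : u ∈ r.support) (hv : v ∈ r.support) :
      Homotopic I (u.map fun a => (a, true)) (v.map fun a => (a, true))
  | congr (w x : List (Q.A × Bool)) {v v' : List (Q.A × Bool)} :
      Homotopic I v v' → Homotopic I (w ++ v ++ x) (w ++ v' ++ x)

/-- `I` is a monomial admissible ideal of `kQ` : every element is a combination of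
paths of length `≥ 2`, membership is detected on supports (monomiality), and `I`
is stable under concatenation with paths on either side. -/
def IsMonomialAdmissible (I : Submodule k (List Q.A →₀ k)) : Prop :=
  (∀ r ∈ I, ∀ p ∈ (r : List Q.A →₀ k).support, Q.IsPath p ∧ 2 ≤ p.length) ∧
  (∀ r : List Q.A →₀ k, (∀ p ∈ r.support, Finsupp.single p (1 : k) ∈ I) → r ∈ I) ∧
  (∀ r ∈ I, ∀ p ∈ (r : List Q.A →₀ k).support, Finsupp.single p (1 : k) ∈ I) ∧
  (∀ p q : List Q.A, Q.IsPath p → Finsupp.single q (1 : k) ∈ I → Q.IsPath (p ++ q) →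
    Finsupp.single (p ++ q) (1 : k) ∈ I) ∧
  (∀ p q : List Q.A, Finsupp.single p (1 : k) ∈ I → Q.IsPath q → Q.IsPath (p ++ q) →
    Finsupp.single (p ++ q) (1 : k) ∈ I)

/-- A `k`-linear automorphism of `kQ` (fixing the vertices) is the transvection
`φ_{α,u,τ}` when its underlying linear map is `substMap α u τ`. -/
def IsTransvectionE (ψ : (List Q.A →₀ k) ≃ₗ[k] (List Q.A →₀ k))
    (α : Q.A) (u : List Q.A) (τ : k) : Prop :=
  (ψ : (List Q.A →₀ k) →ₗ[k] (List Q.A →₀ k)) = substMap Q k α u τ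

/-- The subgroup `T_{<(α,u)}` generated by the transvections `φ_{β,v,τ}` with
`(β,v) < (α,u)`. -/
noncomputable def TltSub (o : Q.PathOrder) (b : Q.A × List Q.A) :
    Subgroup ((List Q.A →₀ k) ≃ₗ[k] (List Q.A →₀ k)) :=
  Subgroup.closure
    {ψ | ∃ β v τ, Q.IsBypass β v ∧ o.bplt (β, v) b ∧ IsTransvectionE Q k ψ β v τ}

/-- The subgroup `T_{≤(α,u)}` generated by the transvections `φ_{β,v,τ}` with
`(β,v) ≤ (α,u)`. -/
noncomputable def TleSub (o : Q.PathOrder) (b : Q.A × List Q.A) :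
    Subgroup ((List Q.A →₀ k) ≃ₗ[k] (List Q.A →₀ k)) :=
  Subgroup.closure
    {ψ | ∃ β v τ, Q.IsBypass β v ∧ o.bple (β, v) b ∧ IsTransvectionE Q k ψ β v τ}

/-- The set `T_{(α,u)} = {φ_{α,u,τ} | τ ∈ k}`. -/
def TsingleSet (b : Q.A × List Q.A) :
    Set ((List Q.A →₀ k) ≃ₗ[k] (List Q.A →₀ k)) :=
  {ψ | ∃ τ : k, IsTransvectionE Q k ψ b.1 b.2 τ}

/-- `m` is the `<`-maximum of the support of `r`. -/
def IsMaxPath (o : Q.PathOrder) (r : List Q.A →₀ k) (m : List Q.A) : Prop :=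
  m ∈ r.support ∧ ∀ p ∈ r.support, p ≠ m → o.lt p m

/-- `B` is the Gröbner basis of the subspace `F` with respect to the path order `o` :
`B` spans `F` and each `r ∈ B` has a leading path `m` (with coefficient `1`, all other
paths of `supp r` being `<`-smaller) whose coefficient in every other element of `B`
vanishes. -/
def IsGB (o : Q.PathOrder) (F : Submodule k (List Q.A →₀ k))
    (B : Set (List Q.A →₀ k)) : Prop :=
  B ⊆ (F : Set (List Q.A →₀ k)) ∧ Submodule.span k B = F ∧
  ∀ r ∈ B, ∃ m, m ∈ (r : List Q.A →₀ k).support ∧ r m = 1 ∧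
    (∀ p ∈ (r : List Q.A →₀ k).support, p ≠ m → o.lt p m) ∧
    ∀ r' ∈ B, r' ≠ r → (r' : List Q.A →₀ k) m = 0

end Linear

/-! Without oriented cycles, two paths ending at the same vertex cannot be proper prefixes of
one another. Hence, scanning `v` from the left, it is determined at each arrow of `u` whether
the arrow was kept or replaced, and by which bypass; so the number of replacements is too. -/

variable {Q : Quiv}

theorem isPath_singleton (a : Q.A) : Q.IsPath [a] :=
  ⟨List.cons_ne_nil a [], List.isChain_singleton a⟩

theorem NoCycle.eq_nil_of_tgt_append_eq (hnc : Q.NoCycle) {p q : List Q.A}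
    (hpq : Q.IsPath (p ++ q)) (hp : p ≠ []) (ht : Q.tgt (p ++ q) = Q.tgt p) : q = [] := by
  by_contra hq
  obtain ⟨-, hqc, hjoin⟩ := List.isChain_append.mp hpq.2
  -- `q` would be a cycle: it starts where `p` ends, and ends there too.
  refine hnc q ⟨hq, hqc⟩ ?_
  have hsrc : Q.src q = Q.tgt p := by
    simp [src, tgt, List.head?_eq_some_head hq, List.getLast?_eq_some_getLast hp,
      hjoin _ (List.getLast?_eq_some_getLast hp) _ (List.head?_eq_some_head hq)]
  rw [hsrc, ← ht, tgt, List.getLast?_append_of_ne_nil _ hq, tgt]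

theorem NoCycle.append_inj_of_tgt_eq (hnc : Q.NoCycle) {p p' v v' : List Q.A}
    (hp : Q.IsPath p) (hp' : Q.IsPath p') (ht : Q.tgt p = Q.tgt p')
    (h : p ++ v = p' ++ v') : p = p' ∧ v = v' := by
  rcases List.append_eq_append_iff.mp h with ⟨q, rfl, rfl⟩ | ⟨q, rfl, rfl⟩
  · obtain rfl := hnc.eq_nil_of_tgt_append_eq hp' hp.1 ht.symm
    simp
  · obtain rfl := hnc.eq_nil_of_tgt_append_eq hp hp'.1 ht
    simp

theorem IsBypass.append_ne_cons (hnc : Q.NoCycle) {a : Q.A} {p v v' : List Q.A}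
    (hb : Q.IsBypass a p) : p ++ v ≠ a :: v' := fun h =>
  hb.2.2.2 (hnc.append_inj_of_tgt_eq hb.1 (isPath_singleton a) hb.2.2.1 h).1

theorem Repl.order_unique (hnc : Q.NoCycle) {t t' : ℕ} {u v : List Q.A}
    (h : Q.Repl t u v) (h' : Q.Repl t' u v) : t = t' := by
  induction h generalizing t' with
  | nil => cases h'; rfl
  | @keep a _ _ v _ ih =>
    generalize hw : a :: v = w at h'
    cases h' with
    | keep _ h₂ => exact ih (List.cons_injective hw ▸ h₂)
    | repl hb _ => exact absurd hw.symm (hb.append_ne_cons hnc)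
  | @repl _ p _ _ v hb _ ih =>
    generalize hw : p ++ v = w at h'
    cases h' with
    | keep _ _ => exact absurd hw (hb.append_ne_cons hnc)
    | repl hb' h₂ =>
      obtain ⟨rfl, rfl⟩ := hnc.append_inj_of_tgt_eq hb.1 hb'.1
        (hb.2.2.1.trans hb'.2.2.1.symm) hw
      rw [ih h₂]

theorem stmt_0_general (Q : Quiv)
    (hnc : Q.NoCycle)
    (u v : List Q.A)
    (t t' : ℕ) (h : Q.DerivedOfOrder t u v) (h' : Q.DerivedOfOrder t' u v) :
    t = t' :=
  Repl.order_unique hnc h.2 h'.2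

/-- If a path `v` in `Q` is derived of a path `u` of order `t` and `v` is
also derived of `u` of order `t'`, then `t = t'`. -/
theorem stmt_0 (Q : Quiv) [Fintype Q.V] [Fintype Q.A]
    (hnc : Q.NoCycle) (hnm : Q.NoMultipleArrows)
    (u v : List Q.A) (hu : Q.IsPath u) (hv : Q.IsPath v)
    (t t' : ℕ) (h : Q.DerivedOfOrder t u v) (h' : Q.DerivedOfOrder t' u v) :
    t = t' :=
  stmt_0_general Q hnc u v t t' h h'

end Quiv
end

section
/- If a path v in Q is derived of a path u of order t, and a path w is derived of v of some order t' ≥ 1, then w is derived of u of some order at least t. -/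
attribute [local instance] Classical.propDecidable

namespace Quiv

section Aux

variable {Q : Quiv}

lemma repl_nil_iff {n : ℕ} {u v : List Q.A} (h : Q.Repl n u v) : u = [] ↔ v = [] := by
  induction h with
  | nil => simp
  | keep a h ih => simp
  | repl hb h ih =>
    obtain ⟨hne, -⟩ := hb.1
    simp [hne]

lemma repl_ne_nil {n : ℕ} {u v : List Q.A} (h : Q.Repl n u v) (hu : u ≠ []) : v ≠ [] :=
  fun hv => hu ((repl_nil_iff h).mpr hv)

lemma repl_src {n : ℕ} {u v : List Q.A} (h : Q.Repl n u v) : Q.src v = Q.src u := by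
  induction h with
  | nil => rfl
  | keep a h ih => simp [Quiv.src]
  | repl hb h ih =>
    obtain ⟨⟨hne, -⟩, hs, -, -⟩ := hb
    obtain ⟨b, p', rfl⟩ := List.exists_cons_of_ne_nil hne
    simpa [Quiv.src] using hs

lemma repl_tgt {n : ℕ} {u v : List Q.A} (h : Q.Repl n u v) : Q.tgt v = Q.tgt u := by
  induction h with
  | nil => rfl
  | keep a h ih =>
    rename_i n' u' v'
    by_cases hu' : u' = []
    · have hv' : v' = [] := (repl_nil_iff h).mp hu'
      subst hu'; subst hv'; rfl
    · have hv' : v' ≠ [] := repl_ne_nil h hu'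
      obtain ⟨b, u'', rfl⟩ := List.exists_cons_of_ne_nil hu'
      obtain ⟨c, v'', rfl⟩ := List.exists_cons_of_ne_nil hv'
      simpa [Quiv.tgt, List.getLast?] using ih
  | repl hb h ih =>
    obtain ⟨⟨hne, -⟩, -, ht, -⟩ := hb
    rename_i a p n' u' v'
    by_cases hu' : u' = []
    · have hv' : v' = [] := (repl_nil_iff h).mp hu'
      subst hu'; subst hv'
      simp only [List.append_nil]
      rw [ht]
      simp [Quiv.tgt]
    · have hv' : v' ≠ [] := repl_ne_nil h hu'
      rw [show Q.tgt (p ++ v') = Q.tgt v' from by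
        simp [Quiv.tgt, List.getLast?_append_of_ne_nil _ hv'],
        show Q.tgt (a :: u') = Q.tgt u' from by
          obtain ⟨b, u'', rfl⟩ := List.exists_cons_of_ne_nil hu'
          simp [Quiv.tgt, List.getLast?]]
      exact ih

lemma repl_isPath {n : ℕ} {u v : List Q.A} (h : Q.Repl n u v) (hu : Q.IsPath u) :
    Q.IsPath v := by
  induction h with
  | nil => exact hu
  | keep a h ih =>
    rename_i n' u' v'
    by_cases hu' : u' = []
    · have hv' : v' = [] := (repl_nil_iff h).mp hu'
      subst hu'; subst hv'; exact hu
    · have hu'' : Q.IsPath u' := ⟨hu', (List.isChain_cons.mp hu.2).2⟩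
      have hv := ih hu''
      refine ⟨by simp, List.isChain_cons.mpr ⟨?_, hv.2⟩⟩
      intro b hb
      have hsrc : Q.src v' = Q.src u' := repl_src h
      obtain ⟨c, u'', rfl⟩ := List.exists_cons_of_ne_nil hu'
      have hb' : v'.head? = some b := hb
      have : (some b).map Q.s = (some c).map Q.s := by
        rw [← hb']; exact hsrc
      have hsc : Q.s b = Q.s c := by simpa using this
      have := (List.isChain_cons.mp hu.2).1 c rfl
      rw [hsc]; exact this
  | repl hb h ih =>
    rename_i a p n' u' v'
    obtain ⟨⟨hpne, hpch⟩, hps, hpt, -⟩ := hb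
    by_cases hu' : u' = []
    · have hv' : v' = [] := (repl_nil_iff h).mp hu'
      subst hu'; subst hv'
      simpa using ⟨hpne, hpch⟩
    · have hu'' : Q.IsPath u' := ⟨hu', (List.isChain_cons.mp hu.2).2⟩
      have hv := ih hu''
      refine ⟨by simp [hpne], List.IsChain.append hpch hv.2 ?_⟩
      intro x hx y hy
      -- Q.t x = Q.t a
      have htx : Q.t x = Q.t a := by
        have : p.getLast?.map Q.t = some (Q.t a) := hpt
        rw [hx] at this; simpa using this
      -- Q.t a = Q.s y
      have hsrc : Q.src v' = Q.src u' := repl_src h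
      obtain ⟨c, u'', rfl⟩ := List.exists_cons_of_ne_nil hu'
      have : (some y).map Q.s = (some c).map Q.s := by
        rw [← hy]; exact hsrc
      have hsc : Q.s y = Q.s c := by simpa using this
      have hta := (List.isChain_cons.mp hu.2).1 c rfl
      rw [htx, hta, hsc]

lemma repl_length {n : ℕ} {u v : List Q.A} (h : Q.Repl n u v) :
    u.length ≤ v.length := by
  induction h with
  | nil => simp
  | keep a h ih => simpa using ih
  | repl hb h ih =>
    rename_i a p n' u' v'
    have hp : 1 ≤ p.length := List.length_pos_iff.mpr hb.1.1
    simp only [List.length_cons, List.length_append]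
    omega

lemma bypass_two_le_length (hnm : Q.NoMultipleArrows) {a : Q.A} {p : List Q.A}
    (hb : Q.IsBypass a p) : 2 ≤ p.length := by
  obtain ⟨⟨hne, -⟩, hs, ht, hpa⟩ := hb
  match p, hne with
  | [b], _ =>
    exfalso
    apply hpa
    have hsb : Q.s b = Q.s a := by simpa [Quiv.src] using hs
    have htb : Q.t b = Q.t a := by simpa [Quiv.tgt] using ht
    have := hnm b a hsb htb
    rw [this]
  | b :: c :: l, _ => simp

lemma repl_bypass (hnm : Q.NoMultipleArrows) {a : Q.A} {p p' : List Q.A} {n : ℕ}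
    (hb : Q.IsBypass a p) (h : Q.Repl n p p') : Q.IsBypass a p' := by
  refine ⟨repl_isPath h hb.1, ?_, ?_, ?_⟩
  · rw [repl_src h]; exact hb.2.1
  · rw [repl_tgt h]; exact hb.2.2.1
  · intro hpa
    have h2 := bypass_two_le_length hnm hb
    have hl := repl_length h
    rw [hpa] at hl
    simp at hl
    omega

lemma repl_split {n : ℕ} {x y w : List Q.A} (h : Q.Repl n (x ++ y) w) :
    ∃ n1 n2 w1 w2, n = n1 + n2 ∧ w = w1 ++ w2 ∧ Q.Repl n1 x w1 ∧ Q.Repl n2 y w2 := by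
  induction x generalizing n w with
  | nil => exact ⟨0, n, [], w, by omega, rfl, Quiv.Repl.nil, h⟩
  | cons a x' ih =>
    rw [List.cons_append] at h
    cases h with
    | keep a h' =>
      obtain ⟨n1, n2, w1, w2, h1, h2, h3, h4⟩ := ih h'
      exact ⟨n1, n2, a :: w1, w2, h1, by rw [h2]; rfl, Quiv.Repl.keep a h3, h4⟩
    | repl hb h' =>
      obtain ⟨n1, n2, w1, w2, h1, h2, h3, h4⟩ := ih h'
      exact ⟨n1 + 1, n2, _ ++ w1, w2, by omega, by rw [h2, List.append_assoc],
        Quiv.Repl.repl hb h3, h4⟩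

lemma repl_trans (hnm : Q.NoMultipleArrows) {m n : ℕ} {u v w : List Q.A}
    (h1 : Q.Repl m u v) (h2 : Q.Repl n v w) : ∃ s, m ≤ s ∧ Q.Repl s u w := by
  induction h1 generalizing n w with
  | nil =>
    cases h2
    exact ⟨0, le_refl 0, Quiv.Repl.nil⟩
  | keep a h ih =>
    cases h2 with
    | keep _ h2' =>
      obtain ⟨s, hs1, hs2⟩ := ih h2'
      exact ⟨s, hs1, Quiv.Repl.keep a hs2⟩
    | repl hb h2' =>
      obtain ⟨s, hs1, hs2⟩ := ih h2'
      exact ⟨s + 1, by omega, Quiv.Repl.repl hb hs2⟩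
  | repl hb h ih =>
    rename_i a p m' u' v'
    obtain ⟨n1, n2, w1, w2, hn, hw, hr1, hr2⟩ := repl_split h2
    obtain ⟨s, hs1, hs2⟩ := ih hr2
    subst hw
    exact ⟨s + 1, by omega, Quiv.Repl.repl (repl_bypass hnm hb hr1) hs2⟩

end Aux

/-- If `v` is derived of `u` of order `t` and `w` is derived of `v` of some
order `t' ≥ 1`, then `w` is derived of `u` of some order at least `t`. -/
theorem stmt_2 (Q : Quiv) [Fintype Q.V] [Fintype Q.A]
    (hnc : Q.NoCycle) (hnm : Q.NoMultipleArrows)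
    (u v w : List Q.A) (hu : Q.IsPath u) (hv : Q.IsPath v) (hw : Q.IsPath w)
    (t t' : ℕ) (h : Q.DerivedOfOrder t u v) (h' : Q.DerivedOfOrder t' v w) :
    ∃ s : ℕ, t ≤ s ∧ Q.DerivedOfOrder s u w := by
  obtain ⟨ht, hr⟩ := h
  obtain ⟨ht', hr'⟩ := h'
  obtain ⟨s, hs1, hs2⟩ := repl_trans hnm hr hr'
  exact ⟨s, hs1, by omega, hs2⟩

end Quiv
end

section
/- If a path v in Q is derived of a path u, then W(v) < W(u). -/
attribute [local instance] Classical.propDecidable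

namespace Quiv

section Proof6

variable {Q : Quiv}

private lemma sublist_pair {a : Q.A} {p : List Q.A} (h : List.Sublist [a, a] p) :
    ∃ l1 l2 l3, p = l1 ++ a :: (l2 ++ a :: l3) := by
  induction p with
  | nil => simp at h
  | cons b q ih =>
    rcases List.cons_sublist_cons'.mp h with h' | ⟨rfl, h'⟩
    · obtain ⟨l1, l2, l3, rfl⟩ := ih h'
      exact ⟨b :: l1, l2, l3, rfl⟩
    · obtain ⟨s, t, rfl⟩ := List.append_of_mem (List.singleton_sublist.mp h')
      exact ⟨[], s, t, rfl⟩

private lemma nodup_of_isPath (hnc : Q.NoCycle) {p : List Q.A} (hp : Q.IsPath p) :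
    p.Nodup := by
  by_contra h
  obtain ⟨a, ha⟩ := List.exists_duplicate_iff_not_nodup.mpr h
  obtain ⟨l1, l2, l3, rfl⟩ := sublist_pair (List.duplicate_iff_sublist.mp ha)
  have hch : List.Chain' (fun x y => Q.t x = Q.s y) ((a :: l2) ++ [a]) :=
    hp.2.infix ⟨l1, l3, by simp⟩
  replace hch := List.isChain_append.mp hch
  obtain ⟨hc1, -, hc3⟩ := hch
  have hlast : Q.t ((a :: l2).getLast (by simp)) = Q.s a := by
    apply hc3
    · rw [List.getLast?_eq_getLast (by simp)]; rfl
    · simp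
  refine hnc (a :: l2) ⟨by simp, hc1⟩ ?_
  simp [Quiv.src, Quiv.tgt, List.getLast?_eq_getLast (by simp : a :: l2 ≠ []), hlast]

private lemma finite_bypass [Fintype Q.A] (hnc : Q.NoCycle) (β : Q.A) :
    Finite {w : List Q.A // Q.IsBypass β w} := by
  have hsub : {w : List Q.A | Q.IsBypass β w} ⊆ {l | l.length ≤ Fintype.card Q.A} :=
    fun w hw => (nodup_of_isPath hnc hw.1).length_le_card
  exact ((List.finite_length_le Q.A (Fintype.card Q.A)).subset hsub).to_subtype

private lemma head_ne_of_bypass (hnc : Q.NoCycle) {a : Q.A} {w : List Q.A}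
    (hw : Q.IsBypass a w) (hh : w.head? = some a) : False := by
  obtain ⟨⟨hne, hch⟩, hsrc, htgt, hneq⟩ := hw
  obtain ⟨c, w', rfl⟩ : ∃ c w', w = c :: w' := by
    cases w with
    | nil => simp at hh
    | cons c w' => exact ⟨_, _, rfl⟩
  have hc : c = a := by simpa using hh
  cases w' with
  | nil => exact hneq (by rw [hc])
  | cons d w'' =>
    replace hch := List.isChain_cons_cons.mp hch
    refine hnc (d :: w'') ⟨by simp, hch.2⟩ ?_
    have h1 : Q.tgt (d :: w'') = some (Q.t a) := by
      rw [← htgt]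
      simp [Quiv.tgt, List.getLast?_cons_cons]
    rw [h1]
    have h2 : Q.s d = Q.t a := by rw [← hc, ← hch.1]
    simp [Quiv.src, h2]

private lemma tgt_append_right (l : List Q.A) {m : List Q.A} (hm : m ≠ []) :
    Q.tgt (l ++ m) = Q.tgt m := by
  simp [Quiv.tgt, List.getLast?_append, List.getLast?_eq_getLast hm]

private lemma isBypass_replace (hnc : Q.NoCycle) (hnm : Q.NoMultipleArrows)
    {α a : Q.A} {A B w : List Q.A}
    (hp : Q.IsBypass α (A ++ a :: B)) (hw : Q.IsBypass a w) :
    Q.IsBypass α (A ++ w ++ B) := by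
  obtain ⟨⟨hpne, hpch⟩, hpsrc, hptgt, hpneα⟩ := hp
  obtain ⟨⟨hwne, hwch⟩, hwsrc, hwtgt, hwnea⟩ := hw
  obtain ⟨c, w', rfl⟩ : ∃ c w', w = c :: w' := by
    cases w with
    | nil => exact absurd rfl hwne
    | cons c w' => exact ⟨_, _, rfl⟩
  have hsc : Q.s c = Q.s a := by simpa [Quiv.src] using hwsrc
  have hlastw : Q.t ((c :: w').getLast (by simp)) = Q.t a := by
    simpa [Quiv.tgt, List.getLast?_eq_getLast (by simp : c :: w' ≠ [])] using hwtgt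
  replace hpch := List.isChain_append.mp hpch
  obtain ⟨hA, haB, hAa⟩ := hpch
  replace haB := List.isChain_cons.mp haB
  obtain ⟨haB1, hB⟩ := haB
  refine ⟨⟨by simp, ?_⟩, ?_, ?_, ?_⟩
  · show List.IsChain _ _
    rw [List.append_assoc, List.isChain_append, List.isChain_append]
    refine ⟨hA, ⟨hwch, hB, ?_⟩, ?_⟩
    · intro x hx y hy
      rw [List.getLast?_eq_getLast (by simp : c :: w' ≠ [])] at hx
      have hx' : x = (c :: w').getLast (by simp) := by
        simpa [eq_comm] using hx
      rw [hx', hlastw]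
      exact haB1 y hy
    · intro x hx y hy
      have hy' : y = c := by
        rw [List.head?_append] at hy
        simpa [eq_comm] using hy
      subst hy'
      have := hAa x hx a (by simp)
      rw [hsc]
      exact this
  · -- source
    cases A with
    | nil =>
      have h0 : Q.s a = Q.s α := by simpa [Quiv.src] using hpsrc
      simpa [Quiv.src, hsc] using h0
    | cons d A' =>
      have h0 : Q.s d = Q.s α := by simpa [Quiv.src] using hpsrc
      simpa [Quiv.src] using h0
  · -- target
    cases B with
    | nil =>
      rw [List.append_nil, tgt_append_right A (by simp : c :: w' ≠ [])]
      have h2 := hptgt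
      rw [show A ++ a :: ([] : List Q.A) = A ++ [a] from rfl,
        tgt_append_right A (by simp : [a] ≠ [])] at h2
      have h3 : Q.t a = Q.t α := by simpa [Quiv.tgt] using h2
      rw [← h3]
      exact hwtgt
    | cons e B' =>
      rw [tgt_append_right (A ++ (c :: w')) (by simp : e :: B' ≠ [])]
      have h2 := hptgt
      rw [show A ++ a :: e :: B' = (A ++ [a]) ++ (e :: B') by simp,
        tgt_append_right (A ++ [a]) (by simp : e :: B' ≠ [])] at h2
      exact h2
  · -- not [α]
    intro hcon
    have hlen := congrArg List.length hcon
    simp at hlen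
    have hA0 : A = [] := List.length_eq_zero_iff.mp (by omega)
    have hB0 : B = [] := List.length_eq_zero_iff.mp (by omega)
    have hw0 : w' = [] := List.length_eq_zero_iff.mp (by omega)
    subst hA0; subst hB0; subst hw0
    simp only [List.nil_append, List.append_nil] at hcon
    have hcα : c = α := by simpa using hcon
    have hca : c = a := hnm c a hsc (by simpa using hlastw)
    refine hpneα ?_
    simp [← hca, hcα]

private lemma replace_inj_aux (hnc : Q.NoCycle) {p w w' : List Q.A} {i j : ℕ}
    (hi : i < p.length) (hij : i < j)
    (hw : Q.IsBypass (p[i]'hi) w)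
    (heq : p.take i ++ w ++ p.drop (i + 1) = p.take j ++ w' ++ p.drop (j + 1)) :
    False := by
  have hw1 : w ≠ [] := hw.1.1
  have hdec : p.take j = p.take i ++ (p[i]'hi) :: ((p.drop (i + 1)).take (j - i - 1)) := by
    conv_lhs => rw [show j = i + ((j - i - 1) + 1) by omega]
    rw [List.take_add, List.drop_eq_getElem_cons hi, List.take_succ_cons]
  rw [hdec] at heq
  simp only [List.append_assoc, List.cons_append] at heq
  have heq' := List.append_cancel_left heq
  obtain ⟨c, tw, rfl⟩ : ∃ c tw, w = c :: tw := by
    cases w with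
    | nil => exact absurd rfl hw1
    | cons c tw => exact ⟨_, _, rfl⟩
  rw [List.cons_append] at heq'
  have hc : c = p[i]'hi := (List.cons.injEq _ _ _ _ ▸ heq').1
  exact head_ne_of_bypass hnc hw (by simp [hc])

private lemma wp_lt_wa [Fintype Q.A] (hnc : Q.NoCycle) (hnm : Q.NoMultipleArrows)
    {α : Q.A} {p : List Q.A} (hb : Q.IsBypass α p) : Q.Wp p < Q.Wa α := by
  have hfin : ∀ β : Q.A, Finite {w : List Q.A // Q.IsBypass β w} := finite_bypass hnc
  haveI : Finite {w : List Q.A // Q.IsBypass α w} := hfin α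
  letI instF : ∀ i : Fin p.length, Fintype {w : List Q.A // Q.IsBypass (p[i.1]'i.2) w} :=
    fun i => @Fintype.ofFinite _ (hfin _)
  have hsplit : ∀ (i : ℕ) (hi : i < p.length),
      p.take i ++ (p[i]'hi) :: p.drop (i + 1) = p := by
    intro i hi
    rw [← List.drop_eq_getElem_cons hi, List.take_append_drop]
  let F : Option (Σ i : Fin p.length, {w : List Q.A // Q.IsBypass (p[i.1]'i.2) w}) →
      {w : List Q.A // Q.IsBypass α w} := fun x =>
    match x with
    | none => ⟨p, hb⟩
    | some ⟨i, w, hw⟩ => ⟨p.take i.1 ++ w ++ p.drop (i.1 + 1),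
        isBypass_replace hnc hnm (by rw [hsplit i.1 i.2]; exact hb) hw⟩
  have hinj : Function.Injective F := by
    rintro (_ | ⟨i, w, hw⟩) (_ | ⟨j, w', hw'⟩) hFeq
    · rfl
    · exfalso
      have heq : p.take j.1 ++ (p[j.1]'j.2) :: p.drop (j.1 + 1)
          = p.take j.1 ++ w' ++ p.drop (j.1 + 1) := by
        rw [hsplit j.1 j.2]
        exact congrArg Subtype.val hFeq
      simp only [List.append_assoc, List.cons_append] at heq
      have heq' := List.append_cancel_left heq
      obtain ⟨c, tw, rfl⟩ : ∃ c tw, w' = c :: tw := by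
        cases w' with
        | nil => exact absurd rfl hw'.1.1
        | cons c tw => exact ⟨_, _, rfl⟩
      rw [List.cons_append] at heq'
      have hc : (p[j.1]'j.2) = c := (List.cons.injEq _ _ _ _ ▸ heq').1
      exact head_ne_of_bypass hnc hw' (by simp [← hc])
    · exfalso
      have heq : p.take i.1 ++ w ++ p.drop (i.1 + 1)
          = p.take i.1 ++ (p[i.1]'i.2) :: p.drop (i.1 + 1) := by
        rw [hsplit i.1 i.2]
        exact congrArg Subtype.val hFeq
      simp only [List.append_assoc, List.cons_append] at heq
      have heq' := List.append_cancel_left heq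
      obtain ⟨c, tw, rfl⟩ : ∃ c tw, w = c :: tw := by
        cases w with
        | nil => exact absurd rfl hw.1.1
        | cons c tw => exact ⟨_, _, rfl⟩
      rw [List.cons_append] at heq'
      have hc : c = p[i.1]'i.2 := (List.cons.injEq _ _ _ _ ▸ heq').1
      exact head_ne_of_bypass hnc hw (by simp [hc])
    · have heq : p.take i.1 ++ w ++ p.drop (i.1 + 1)
          = p.take j.1 ++ w' ++ p.drop (j.1 + 1) := congrArg Subtype.val hFeq
      rcases lt_trichotomy i.1 j.1 with hlt | heqij | hgt
      · exact absurd heq (fun h => replace_inj_aux hnc i.2 hlt hw h)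
      · have hij : i = j := Fin.ext heqij
        subst hij
        have h1 : p.take i.1 ++ (w ++ p.drop (i.1 + 1))
            = p.take i.1 ++ (w' ++ p.drop (i.1 + 1)) := by
          simpa only [List.append_assoc] using heq
        have h2 := List.append_cancel_left h1
        have h3 : w = w' := List.append_cancel_right h2
        subst h3
        rfl
      · exact absurd heq.symm (fun h => replace_inj_aux hnc j.2 hgt hw' h)
  have hcard := Nat.card_le_card_of_injective F hinj
  rw [Finite.card_option, Nat.card_eq_fintype_card, Fintype.card_sigma] at hcard
  have hsum : ∑ i : Fin p.length, Fintype.card {w : List Q.A // Q.IsBypass (p[i.1]'i.2) w}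
      = Q.Wp p := by
    rw [show Q.Wp p = (p.map Q.Wa).sum from rfl, ← Fin.sum_univ_fun_getElem p Q.Wa]
    refine Finset.sum_congr rfl fun i _ => ?_
    rw [show Q.Wa (p[i.1]'i.2) = Nat.card {w : List Q.A // Q.IsBypass (p[i.1]'i.2) w} from rfl,
      Nat.card_eq_fintype_card]
  rw [hsum] at hcard
  have hWa : Q.Wa α = Nat.card {w : List Q.A // Q.IsBypass α w} := rfl
  omega

private lemma repl_le [Fintype Q.A] (hnc : Q.NoCycle) (hnm : Q.NoMultipleArrows)
    {n : ℕ} {u v : List Q.A} (h : Q.Repl n u v) : Q.Wp v + n ≤ Q.Wp u := by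
  induction h with
  | nil => simp [Quiv.Wp]
  | keep a h ih =>
    simp only [Quiv.Wp, List.map_cons, List.sum_cons] at *
    omega
  | repl hb h ih =>
    have hlt := wp_lt_wa hnc hnm hb
    simp only [Quiv.Wp, List.map_cons, List.sum_cons, List.map_append, List.sum_append] at *
    omega

end Proof6

/-- If a path `v` in `Q` is derived of a path `u`, then `W(v) < W(u)`. -/
theorem stmt_6 (Q : Quiv) [Fintype Q.V] [Fintype Q.A]
    (hnc : Q.NoCycle) (hnm : Q.NoMultipleArrows)
    (u v : List Q.A) (hu : Q.IsPath u) (hv : Q.IsPath v)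
    (h : Q.Derived u v) :
    Q.Wp v < Q.Wp u := by
  obtain ⟨t, ht1, ht2⟩ := h
  have := repl_le hnc hnm ht2
  omega

end Quiv
end

section
/- Let ψ ∈ T and let u = α_n⋯α_1 be a path in Q (with the α_i arrows). Then supp(ψ(u)) consists exactly of the paths obtained from u as follows: choose r ≥ 0, indices 1 ≤ i_1 < ⋯ < i_r ≤ n and, for each l ∈ {1,…,r}, a path w_l ∈ supp(ψ(α_{i_l})) with w_l ≠ α_{i_l}, and replace the arrow α_{i_l} in u by w_l for each l; moreover such a path appears in ψ(u) with coefficient the product of the coefficients w_l^*(ψ(α_{i_l})). As a consequence, ψ(u) − u is a k-linear combination of paths derived of u, and u^*(ψ(u)) = 1. -/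
attribute [local instance] Classical.propDecidable

namespace Quiv

section ProofAux

variable (Q : Quiv) (k : Type) [Field k]

/-- the composability relation on arrows -/
abbrev Cmp : Q.A → Q.A → Prop := fun a b => Q.t a = Q.s b

lemma src_cons (a : Q.A) (l : List Q.A) : Q.src (a :: l) = some (Q.s a) := rfl

lemma tgt_single (a : Q.A) : Q.tgt [a] = some (Q.t a) := rfl

/-- view a finsupp as an element of the path algebra -/
abbrev toMA (f : List Q.A →₀ k) : MonoidAlgebra k (FreeMonoid Q.A) := MonoidAlgebra.ofCoeff f

lemma toMA_add (f g : List Q.A →₀ k) : toMA Q k (f + g) = toMA Q k f + toMA Q k g := rfl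

lemma toMA_smul (c : k) (f : List Q.A →₀ k) : toMA Q k (c • f) = c • toMA Q k f := rfl

lemma toMA_single (u : List Q.A) (c : k) :
    toMA Q k (Finsupp.single u c) = MonoidAlgebra.single (FreeMonoid.ofList u) c := rfl

lemma mulF_eq (f g : MonoidAlgebra k (FreeMonoid Q.A)) :
    mulF Q k f.coeff g.coeff = (f * g).coeff := by
  rw [MonoidAlgebra.mul_def]
  simp only [MonoidAlgebra.coeff_finsuppSum, MonoidAlgebra.coeff_single]
  rfl

/-- substitution product along `g` -/
noncomputable def Pg (g : Q.A → MonoidAlgebra k (FreeMonoid Q.A)) :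
    List Q.A → MonoidAlgebra k (FreeMonoid Q.A)
  | [] => 1
  | a :: u => g a * Pg g u

lemma substPoly_eq (α : Q.A) (v : List Q.A) (τ : k) (p : List Q.A) :
    substPoly Q k α v τ p = (Pg Q k (fun a => toMA Q k (arrowImg Q k α v τ a)) p).coeff := by
  induction p with
  | nil => rfl
  | cons a u ih =>
    rw [substPoly, ih]
    exact mulF_eq Q k _ _

/-- first half of decomposition uniqueness -/
lemma decomp_half (hnc : Q.NoCycle) {x : Q.V} {w w' v v' : List Q.A}
    (htw : Q.tgt w = some x)
    (hcw' : w'.Chain' (Cmp Q)) (htw' : Q.tgt w' = some x)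
    (he : w ++ v = w' ++ v') (hle : w.length ≤ w'.length) : w = w' := by
  have hpre : w <+: w' :=
    List.prefix_of_prefix_length_le ⟨v, he⟩ ⟨v', rfl⟩ hle
  obtain ⟨m, rfl⟩ := hpre
  cases m with
  | nil => simp
  | cons b t =>
    exfalso
    have h1 := List.isChain_append.mp hcw'
    obtain ⟨lw, hlw, hlwt⟩ := Option.map_eq_some_iff.mp htw
    have hhead : Q.s b = x := by
      have h2 : Q.t lw = Q.s b := h1.2.2 lw (by simp [hlw]) b rfl
      rw [← h2, hlwt]
    have hsrc : Q.src (b :: t) = some x := by simp [Quiv.src, hhead]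
    have htgt : Q.tgt (b :: t) = some x := by
      obtain ⟨lm, hlm⟩ := Option.isSome_iff_exists.mp
        (List.getLast?_isSome.mpr (List.cons_ne_nil b t))
      have : (w ++ (b :: t)).getLast? = some lm := by
        rw [List.getLast?_append, hlm]; rfl
      rw [Quiv.tgt, hlm]
      rw [Quiv.tgt, this] at htw'
      exact htw'
    exact hnc (b :: t) ⟨List.cons_ne_nil b t, h1.2.1⟩ (hsrc.trans htgt.symm)

lemma decomp_unique (hnc : Q.NoCycle) {x : Q.V} {w w' v v' : List Q.A}
    (hcw : w.Chain' (Cmp Q)) (htw : Q.tgt w = some x)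
    (hcw' : w'.Chain' (Cmp Q)) (htw' : Q.tgt w' = some x)
    (he : w ++ v = w' ++ v') : w = w' ∧ v = v' := by
  have hww' : w = w' := by
    rcases le_total w.length w'.length with hle | hle
    · exact decomp_half Q hnc htw hcw' htw' he hle
    · exact (decomp_half Q hnc htw' hcw htw he.symm hle).symm
  refine ⟨hww', ?_⟩
  subst hww'
  exact List.append_cancel_left he

end ProofAux
section ProofAux2

variable (Q : Quiv) (k : Type) [Field k]

/-- the transvection as an algebra endomorphism of the path algebra -/
noncomputable def substAlg (α : Q.A) (v : List Q.A) (τ : k) :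
    MonoidAlgebra k (FreeMonoid Q.A) →ₐ[k] MonoidAlgebra k (FreeMonoid Q.A) :=
  MonoidAlgebra.lift k (MonoidAlgebra k (FreeMonoid Q.A)) (FreeMonoid Q.A)
    (FreeMonoid.lift (fun a => toMA Q k (arrowImg Q k α v τ a)))

lemma substAlg_single (α : Q.A) (v : List Q.A) (τ : k) (u : List Q.A) :
    substAlg Q k α v τ (MonoidAlgebra.single (FreeMonoid.ofList u) 1)
      = Pg Q k (fun a => toMA Q k (arrowImg Q k α v τ a)) u := by
  induction u with
  | nil =>
    rw [show MonoidAlgebra.single (FreeMonoid.ofList ([] : List Q.A)) (1:k)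
      = (1 : MonoidAlgebra k (FreeMonoid Q.A)) from rfl]
    exact map_one _
  | cons a u ih =>
    have hsplit : MonoidAlgebra.single (FreeMonoid.ofList (a :: u)) (1:k) =
        MonoidAlgebra.single (FreeMonoid.of a) (1:k) *
          MonoidAlgebra.single (FreeMonoid.ofList u) (1:k) := by
      rw [MonoidAlgebra.single_mul_single, one_mul]
      rfl
    rw [hsplit, map_mul]
    rw [ih, Pg]
    congr 1
    rw [substAlg, MonoidAlgebra.lift_single, FreeMonoid.lift_eval_of, one_smul]

lemma substMap_eq (α : Q.A) (v : List Q.A) (τ : k) (f : List Q.A →₀ k) :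
    substMap Q k α v τ f = (substAlg Q k α v τ (toMA Q k f)).coeff := by
  induction f using Finsupp.induction_linear with
  | zero =>
    show (substMap Q k α v τ) 0 = (substAlg Q k α v τ 0).coeff
    simp only [map_zero, MonoidAlgebra.coeff_zero]
    rfl
  | add f g hf hg => rw [map_add, toMA_add, map_add, MonoidAlgebra.coeff_add, hf, hg]; rfl
  | single u c =>
    rw [show (Finsupp.single u c : List Q.A →₀ k) = c • Finsupp.single u 1 by
      rw [Finsupp.smul_single, smul_eq_mul, mul_one], map_smul, toMA_smul, map_smul,
      MonoidAlgebra.coeff_smul, toMA_single, substAlg_single, substMap, Finsupp.linearCombination_single, one_smul, substPoly_eq] <;> rfl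

/-- coefficient of a product at a uniquely-decomposable path -/
lemma mul_apply_decomp (hnc : Q.NoCycle) {x : Q.V} (f h : MonoidAlgebra k (FreeMonoid Q.A))
    (hf : ∀ w' ∈ f.coeff.support, w'.Chain' (Cmp Q) ∧ Q.tgt w' = some x)
    {w v : List Q.A} (hcw : w.Chain' (Cmp Q)) (htw : Q.tgt w = some x)
    (hwmem : f.coeff w ≠ 0) (hvmem : h.coeff v ≠ 0) :
    (f * h).coeff (w ++ v) = f.coeff w * h.coeff v := by
  have houter : ∀ b ∈ f.coeff.support, b ≠ w →
      (∑ v' ∈ h.coeff.support, if b * v' = w ++ v then f.coeff b * h.coeff v' else 0) = 0 := by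
    intro b hb hne
    apply Finset.sum_eq_zero
    intro v' _
    apply if_neg
    intro hcon
    obtain ⟨hb1, hb2⟩ := hf b hb
    exact hne (decomp_unique Q hnc hb1 hb2 hcw htw hcon).1
  have hinner : ∀ b ∈ h.coeff.support, b ≠ v →
      (if FreeMonoid.ofList w * b = w ++ v then f.coeff w * h.coeff b else 0) = 0 := by
    intro b _ hne
    apply if_neg
    intro hcon
    exact hne (List.append_cancel_left hcon)
  show (f * h).coeff (FreeMonoid.ofList w * FreeMonoid.ofList v) =
    f.coeff (FreeMonoid.ofList w) * h.coeff (FreeMonoid.ofList v)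
  rw [MonoidAlgebra.coeff_mul]
  simp only [Finsupp.sum]
  exact calc
    (∑ a₁ ∈ f.coeff.support, ∑ a₂ ∈ h.coeff.support,
        if a₁ * a₂ = w ++ v then f.coeff a₁ * h.coeff a₂ else 0)
      = ∑ a₂ ∈ h.coeff.support,
          if FreeMonoid.ofList w * a₂ = w ++ v then f.coeff w * h.coeff a₂ else 0 :=
        Finset.sum_eq_single_of_mem w (Finsupp.mem_support_iff.mpr hwmem) houter
    _ = if FreeMonoid.ofList w * FreeMonoid.ofList v = w ++ v
          then f.coeff w * h.coeff v else 0 :=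
        Finset.sum_eq_single_of_mem v (Finsupp.mem_support_iff.mpr hvmem) hinner
    _ = f.coeff w * h.coeff v := if_pos rfl

end ProofAux2
section ProofAux3

variable (Q : Quiv) (k : Type) [Field k]

lemma src_append (w v : List Q.A) (hw : w ≠ []) : Q.src (w ++ v) = Q.src w := by
  cases w with
  | nil => exact absurd rfl hw
  | cons a t => rfl

lemma tgt_append (w v : List Q.A) (hv : v ≠ []) : Q.tgt (w ++ v) = Q.tgt v := by
  obtain ⟨lm, hlm⟩ := Option.isSome_iff_exists.mp (List.getLast?_isSome.mpr hv)
  simp [Quiv.tgt, List.getLast?_append, hlm]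

lemma support_mul' (f h : MonoidAlgebra k (FreeMonoid Q.A)) (q : List Q.A)
    (hq : q ∈ (f * h).coeff.support) :
    ∃ w v : List Q.A, w ∈ f.coeff.support ∧ v ∈ h.coeff.support ∧ q = w ++ v := by
  have hsub := MonoidAlgebra.support_coeff_mul_subset f h hq
  obtain ⟨w, hw, v, hv, he⟩ := Finset.mem_mul.mp hsub
  exact ⟨w, v, hw, hv, he.symm⟩

lemma Pg_shape (g : Q.A → MonoidAlgebra k (FreeMonoid Q.A))
    (hgs : ∀ a : Q.A, ∀ w ∈ (g a).coeff.support,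
      w ≠ [] ∧ w.Chain' (Cmp Q) ∧ Q.src w = some (Q.s a) ∧ Q.tgt w = some (Q.t a)) :
    ∀ (u : List Q.A), u.Chain' (Cmp Q) → ∀ q : List Q.A, q ∈ (Pg Q k g u).coeff.support →
      q.Chain' (Cmp Q) ∧ (q = [] ↔ u = []) ∧ Q.src q = Q.src u ∧ Q.tgt q = Q.tgt u ∧
        u.length ≤ q.length := by
  intro u
  induction u with
  | nil =>
    intro _ q hq
    have h1 : q ∈ (Finsupp.single (1 : FreeMonoid Q.A) (1:k)).support := hq
    have hq0 : q = [] := Finset.mem_singleton.mp (Finsupp.support_single_subset h1)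
    subst hq0
    exact ⟨List.isChain_nil, by simp, rfl, rfl, le_refl _⟩
  | cons a u ih =>
    intro hc q hq
    obtain ⟨w, v, hw, hv, he2⟩ := support_mul' Q k (g a) (Pg Q k g u) q hq
    subst he2
    obtain ⟨hwne, hwch, hwsrc, hwtgt⟩ := hgs a w hw
    obtain ⟨hvch, hviff, hvsrc, hvtgt, hvlen⟩ := ih (List.IsChain.tail hc) v hv
    refine ⟨?_, ?_, ?_, ?_, ?_⟩
    · show List.IsChain _ _
      rw [List.isChain_append]
      refine ⟨hwch, hvch, ?_⟩
      intro lw hlw hd hhd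
      have hlw' : w.getLast? = some lw := hlw
      have hhd' : v.head? = some hd := hhd
      have ht1 : Q.t lw = Q.t a := by
        rw [Quiv.tgt, hlw'] at hwtgt
        exact Option.some_injective _ hwtgt
      have hvne : v ≠ [] := by
        intro hcon; rw [hcon] at hhd'; simp at hhd'
      have hune : u ≠ [] := fun hcon => hvne (hviff.mpr hcon)
      cases u with
      | nil => exact absurd rfl hune
      | cons b u' =>
        have hs1 : Q.s hd = Q.s b := by
          rw [Quiv.src, hhd'] at hvsrc
          exact Option.some_injective _ hvsrc
        have hab : Q.t a = Q.s b := (List.isChain_cons_cons.mp hc).1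
        show Q.t lw = Q.s hd
        rw [ht1, hab, ← hs1]
    · constructor
      · intro h0; exact absurd (List.append_eq_nil_iff.mp h0).1 hwne
      · intro h0; exact absurd h0 (List.cons_ne_nil a u)
    · rw [src_append Q w v hwne, hwsrc]; rfl
    · by_cases hv0 : v = []
      · have hu0 : u = [] := hviff.mp hv0
        subst hv0; subst hu0
        rw [List.append_nil]
        exact hwtgt
      · have hu0 : u ≠ [] := fun hcon => hv0 (hviff.mpr hcon)
        rw [tgt_append Q w v hv0, hvtgt]
        exact (tgt_append Q [a] u hu0).symm
    · rw [List.length_append, List.length_cons]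
      have : 1 ≤ w.length := List.length_pos_iff.mpr hwne
      omega

lemma Pg_replExp (hnc : Q.NoCycle) (g : Q.A → MonoidAlgebra k (FreeMonoid Q.A))
    (hgs : ∀ a : Q.A, ∀ w ∈ (g a).coeff.support,
      w ≠ [] ∧ w.Chain' (Cmp Q) ∧ Q.src w = some (Q.s a) ∧ Q.tgt w = some (Q.t a))
    (hg2 : ∀ a : Q.A, (g a).coeff [a] = 1)
    {u p : List Q.A} {c : k} (h : ReplExp Q k (fun a => (g a).coeff) u p c) :
    u.Chain' (Cmp Q) → ((Pg Q k g u).coeff p = c ∧ c ≠ 0) := by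
  induction h with
  | nil =>
    intro _
    constructor
    · exact MonoidAlgebra.coeff_one_one
    · exact one_ne_zero
  | @keep a u₀ v c₀ h ih =>
    intro hc
    obtain ⟨ih1, ih2⟩ := ih (List.IsChain.tail hc)
    have hdec := mul_apply_decomp Q k hnc (g a) (Pg Q k g u₀)
      (fun w' hw' => ⟨(hgs a w' hw').2.1, (hgs a w' hw').2.2.2⟩)
      (List.isChain_singleton a) (tgt_single Q a)
      (by rw [hg2]; exact one_ne_zero) (by rw [ih1]; exact ih2)
    constructor
    · show (g a * Pg Q k g u₀).coeff ([a] ++ v) = c₀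
      rw [hdec, hg2, ih1, one_mul]
    · exact ih2
  | @repl a w u₀ v c₀ hw hne h ih =>
    intro hc
    obtain ⟨ih1, ih2⟩ := ih (List.IsChain.tail hc)
    obtain ⟨hwne, hwch, hwsrc, hwtgt⟩ := hgs a w hw
    have hdec := mul_apply_decomp Q k hnc (g a) (Pg Q k g u₀)
      (fun w' hw' => ⟨(hgs a w' hw').2.1, (hgs a w' hw').2.2.2⟩)
      hwch hwtgt (Finsupp.mem_support_iff.mp hw) (by rw [ih1]; exact ih2)
    constructor
    · show (g a * Pg Q k g u₀).coeff (w ++ v) = (g a).coeff w * c₀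
      rw [hdec, ih1]
    · exact mul_ne_zero (Finsupp.mem_support_iff.mp hw) ih2

lemma Pg_support (g : Q.A → MonoidAlgebra k (FreeMonoid Q.A)) :
    ∀ (u : List Q.A), ∀ p : List Q.A, p ∈ (Pg Q k g u).coeff.support →
      ∃ c, ReplExp Q k (fun a => (g a).coeff) u p c := by
  intro u
  induction u with
  | nil =>
    intro p hp
    have h1 : p ∈ (Finsupp.single (1 : FreeMonoid Q.A) (1:k)).support := hp
    have hp0 : p = [] := Finset.mem_singleton.mp (Finsupp.support_single_subset h1)
    subst hp0
    exact ⟨1, .nil⟩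
  | cons a u ih =>
    intro p hp
    obtain ⟨w, v, hw, hv, he2⟩ := support_mul' Q k (g a) (Pg Q k g u) p hp
    subst he2
    obtain ⟨c, hre⟩ := ih v hv
    by_cases hwa : w = [a]
    · subst hwa
      exact ⟨c, .keep a hre⟩
    · exact ⟨(g a).coeff w * c, .repl a hw hwa hre⟩

lemma ReplExp_self (g : Q.A → (List Q.A →₀ k)) :
    ∀ u : List Q.A, ReplExp Q k g u u 1 := by
  intro u
  induction u with
  | nil => exact .nil
  | cons a u ih => exact .keep a ih

lemma Repl_refl : ∀ u : List Q.A, Q.Repl 0 u u := by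
  intro u
  induction u with
  | nil => exact .nil
  | cons a u ih => exact .keep a ih

lemma ReplExp_derived (g : Q.A → (List Q.A →₀ k))
    (hgs : ∀ a : Q.A, ∀ w ∈ (g a).support,
      w ≠ [] ∧ w.Chain' (Cmp Q) ∧ Q.src w = some (Q.s a) ∧ Q.tgt w = some (Q.t a))
    {u p : List Q.A} {c : k} (h : ReplExp Q k g u p c) : p = u ∨ Q.Derived u p := by
  induction h with
  | nil => left; rfl
  | keep a h ih =>
    rcases ih with rfl | ⟨t, ht, hr⟩
    · left; rfl
    · right; exact ⟨t, ht, .keep a hr⟩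
  | @repl a w u₀ v₀ c₀ hw hne h ih =>
    have hb : Q.IsBypass a w := by
      obtain ⟨h1, h2, h3, h4⟩ := hgs a w hw
      exact ⟨⟨h1, h2⟩, h3, h4, hne⟩
    right
    rcases ih with rfl | ⟨t, ht, hr⟩
    · exact ⟨1, le_refl 1, .repl hb (Repl_refl Q _)⟩
    · exact ⟨t + 1, by omega, .repl hb hr⟩

end ProofAux3
section ProofAux4

variable (Q : Quiv) (k : Type) [Field k]

lemma arrowImg_good (α : Q.A) (v : List Q.A) (τ : k) (hb : Q.IsBypass α v) :
    (∀ b : Q.A, ∀ w ∈ (arrowImg Q k α v τ b).support,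
      w ≠ [] ∧ w.Chain' (Cmp Q) ∧ Q.src w = some (Q.s b) ∧ Q.tgt w = some (Q.t b)) ∧
    (∀ b : Q.A, arrowImg Q k α v τ b [b] = 1) := by
  obtain ⟨⟨hvne, hvch⟩, hvsrc, hvtgt, hvne'⟩ := hb
  constructor
  · intro b w hw
    by_cases hba : b = α
    · rw [arrowImg, if_pos hba] at hw
      have hsub := Finsupp.support_add hw
      rw [Finset.mem_union] at hsub
      rcases hsub with h1 | h1
      · have hwb : w = [b] := Finset.mem_singleton.mp (Finsupp.support_single_subset h1)
        subst hwb
        exact ⟨List.cons_ne_nil b [], List.isChain_singleton b, rfl, tgt_single Q b⟩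
      · have h2 := Finsupp.support_smul h1
        have hwv : w = v := Finset.mem_singleton.mp (Finsupp.support_single_subset h2)
        subst hwv
        subst hba
        exact ⟨hvne, hvch, hvsrc, hvtgt⟩
    · rw [arrowImg, if_neg hba] at hw
      have hwb : w = [b] := Finset.mem_singleton.mp (Finsupp.support_single_subset hw)
      subst hwb
      exact ⟨List.cons_ne_nil b [], List.isChain_singleton b, rfl, tgt_single Q b⟩
  · intro b
    by_cases hba : b = α
    · subst hba
      rw [arrowImg, if_pos rfl, Finsupp.add_apply, Finsupp.smul_apply,
        Finsupp.single_eq_same, Finsupp.single_eq_of_ne (fun h => hvne' h.symm), smul_zero, add_zero]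
    · rw [arrowImg, if_neg hba, Finsupp.single_eq_same]

lemma Pg_singleton (g : Q.A → MonoidAlgebra k (FreeMonoid Q.A)) (a : Q.A) :
    Pg Q k g [a] = g a := by
  show g a * Pg Q k g [] = g a
  show g a * 1 = g a
  rw [mul_one]

lemma substMap_shape (α : Q.A) (v : List Q.A) (τ : k) (hb : Q.IsBypass α v)
    {x y : Q.V} (f : List Q.A →₀ k)
    (hf : ∀ p ∈ f.support, p ≠ [] ∧ p.Chain' (Cmp Q) ∧ Q.src p = some x ∧ Q.tgt p = some y) :
    ∀ q : List Q.A, q ∈ (substMap Q k α v τ f).support →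
      q ≠ [] ∧ q.Chain' (Cmp Q) ∧ Q.src q = some x ∧ Q.tgt q = some y := by
  intro q hq
  rw [substMap, Finsupp.linearCombination_apply] at hq
  have hbi := Finsupp.support_sum hq
  rw [Finset.mem_biUnion] at hbi
  obtain ⟨p, hp, hq2⟩ := hbi
  have hq3 := Finsupp.support_smul hq2
  rw [substPoly_eq] at hq3
  obtain ⟨hpne, hpch, hpsrc, hptgt⟩ := hf p hp
  obtain ⟨hqch, hqiff, hqsrc, hqtgt, _⟩ :=
    Pg_shape Q k (fun b => toMA Q k (arrowImg Q k α v τ b))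
      (arrowImg_good Q k α v τ hb).1 p hpch q hq3
  exact ⟨fun h => hpne (hqiff.mp h), hqch, hqsrc.trans hpsrc, hqtgt.trans hptgt⟩

lemma substMap_coeff (hnm : Q.NoMultipleArrows) (α : Q.A) (v : List Q.A) (τ : k)
    (hb : Q.IsBypass α v) (a : Q.A) (f : List Q.A →₀ k)
    (hf : ∀ p ∈ f.support, p ≠ [] ∧ p.Chain' (Cmp Q) ∧
      Q.src p = some (Q.s a) ∧ Q.tgt p = some (Q.t a))
    (hfa : f [a] = 1) :
    substMap Q k α v τ f [a] = 1 := by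
  have hmem : [a] ∈ f.support := Finsupp.mem_support_iff.mpr (by rw [hfa]; exact one_ne_zero)
  have hzero : ∀ p ∈ f.support, p ≠ [a] → (f p • substPoly Q k α v τ p) [a] = 0 := by
    intro p hp hpa
    rw [Finsupp.smul_apply]
    suffices hzz : substPoly Q k α v τ p [a] = 0 by rw [hzz, smul_zero]
    by_contra hnz
    have hmem2 : ([a] : List Q.A) ∈
        (Pg Q k (fun b => toMA Q k (arrowImg Q k α v τ b)) p).coeff.support := by
      rw [← substPoly_eq]; exact Finsupp.mem_support_iff.mpr hnz
    obtain ⟨hpne, hpch, hpsrc, hptgt⟩ := hf p hp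
    obtain ⟨-, -, hqsrc, hqtgt, hqlen⟩ :=
      Pg_shape Q k (fun b => toMA Q k (arrowImg Q k α v τ b))
        (arrowImg_good Q k α v τ hb).1 p hpch [a] hmem2
    have hlen1 : p.length = 1 := by
      have h1 : 1 ≤ p.length := List.length_pos_iff.mpr hpne
      have h2 : p.length ≤ 1 := hqlen
      omega
    obtain ⟨b, hbp⟩ := List.length_eq_one_iff.mp hlen1
    subst hbp
    apply hpa
    have hsb : Q.s b = Q.s a := by
      rw [src_cons] at hpsrc
      exact Option.some_injective _ hpsrc
    have htb : Q.t b = Q.t a := by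
      rw [tgt_single] at hptgt
      exact Option.some_injective _ hptgt
    rw [hnm b a hsb htb]
  have hstep : substMap Q k α v τ f [a]
      = ∑ p ∈ f.support, (f p • substPoly Q k α v τ p) [a] := by
    rw [substMap, Finsupp.linearCombination_apply, Finsupp.sum_apply]
    rfl
  rw [hstep, Finset.sum_eq_single_of_mem [a] hmem hzero, hfa, one_smul]
  rw [substPoly_eq, Pg_singleton]
  exact (arrowImg_good Q k α v τ hb).2 a

lemma single_nil_eq_one :
    toMA Q k (Finsupp.single ([] : List Q.A) (1:k)) = (1 : MonoidAlgebra k (FreeMonoid Q.A)) :=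
  rfl

lemma single_split (a : Q.A) (u : List Q.A) :
    toMA Q k (Finsupp.single (a :: u) (1:k)) =
      toMA Q k (Finsupp.single [a] (1:k)) * toMA Q k (Finsupp.single u (1:k)) := by
  rw [toMA_single, toMA_single, toMA_single, MonoidAlgebra.single_mul_single, one_mul]
  rfl

lemma memT_main (hnm : Q.NoMultipleArrows) :
    ∀ L : List (Q.A × List Q.A × k), (∀ x ∈ L, Q.IsBypass x.1 x.2.1) →
    (∃ Φ : MonoidAlgebra k (FreeMonoid Q.A) →ₐ[k] MonoidAlgebra k (FreeMonoid Q.A),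
      ∀ f : List Q.A →₀ k, ((L.map fun x => substMap Q k x.1 x.2.1 x.2.2).prod) f =
        (Φ (toMA Q k f)).coeff) ∧
    ((∀ a : Q.A, ∀ w : List Q.A,
        w ∈ (((L.map fun x => substMap Q k x.1 x.2.1 x.2.2).prod) (Finsupp.single [a] 1)).support →
        w ≠ [] ∧ w.Chain' (Cmp Q) ∧ Q.src w = some (Q.s a) ∧ Q.tgt w = some (Q.t a)) ∧
      (∀ a : Q.A, ((L.map fun x => substMap Q k x.1 x.2.1 x.2.2).prod) (Finsupp.single [a] 1) [a] = 1)) := by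
  intro L
  induction L with
  | nil =>
    intro _
    refine ⟨⟨AlgHom.id k _, fun f => rfl⟩, ?_, ?_⟩
    · intro a w hw
      have h1 : w ∈ (Finsupp.single ([a] : List Q.A) (1:k)).support := hw
      have hwa : w = [a] := Finset.mem_singleton.mp (Finsupp.support_single_subset h1)
      subst hwa
      exact ⟨List.cons_ne_nil a [], List.isChain_singleton a, rfl, tgt_single Q a⟩
    · intro a
      show (Finsupp.single ([a] : List Q.A) (1:k)) [a] = 1
      exact Finsupp.single_eq_same
  | cons x L ih =>
    intro hL
    have hbx : Q.IsBypass x.1 x.2.1 := hL x List.mem_cons_self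
    obtain ⟨⟨Φ', hΦ'⟩, hgs', hg2'⟩ := ih (fun y hy => hL y (List.mem_cons_of_mem x hy))
    have hprod : ∀ f : List Q.A →₀ k,
        (((x :: L).map fun y => substMap Q k y.1 y.2.1 y.2.2).prod) f =
          substMap Q k x.1 x.2.1 x.2.2 (((L.map fun y => substMap Q k y.1 y.2.1 y.2.2).prod) f) := by
      intro f
      rw [List.map_cons, List.prod_cons]
      rfl
    refine ⟨⟨(substAlg Q k x.1 x.2.1 x.2.2).comp Φ', fun f => ?_⟩, ?_, ?_⟩
    · rw [hprod, hΦ']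
      exact substMap_eq Q k _ _ _ _
    · intro a w hw
      rw [hprod] at hw
      exact substMap_shape Q k x.1 x.2.1 x.2.2 hbx _ (hgs' a) w hw
    · intro a
      rw [hprod]
      exact substMap_coeff Q k hnm x.1 x.2.1 x.2.2 hbx a _ (hgs' a) (hg2' a)

end ProofAux4
section ProofAux5

variable (Q : Quiv) (k : Type) [Field k]

lemma prod_single_eq_Pg (L : List (Q.A × List Q.A × k))
    (Φ : MonoidAlgebra k (FreeMonoid Q.A) →ₐ[k] MonoidAlgebra k (FreeMonoid Q.A))
    (hΦ : ∀ f : List Q.A →₀ k, ((L.map fun x => substMap Q k x.1 x.2.1 x.2.2).prod) f =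
      (Φ (toMA Q k f)).coeff) :
    ∀ u : List Q.A, ((L.map fun x => substMap Q k x.1 x.2.1 x.2.2).prod) (Finsupp.single u 1)
      = (Pg Q k (fun a => toMA Q k (((L.map fun x => substMap Q k x.1 x.2.1 x.2.2).prod)
          (Finsupp.single [a] 1))) u).coeff := by
  have e : ∀ w : List Q.A, Φ (toMA Q k (Finsupp.single w 1)) =
      toMA Q k (((L.map fun x => substMap Q k x.1 x.2.1 x.2.2).prod) (Finsupp.single w 1)) :=
    fun w => (congrArg (toMA Q k) (hΦ _)).symm
  intro u
  induction u with
  | nil =>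
    rw [hΦ, single_nil_eq_one Q k, map_one]
    rfl
  | cons a u ihu =>
    rw [hΦ, single_split, map_mul, e, e, ihu]
    rfl

end ProofAux5
/-- Let `ψ ∈ T` and let `u` be a path in `Q`.  Then `supp(ψ(u))` consists
exactly of the paths obtained from `u` by replacing, at finitely many (increasing)
positions, an arrow `a` of `u` by a path `w ∈ supp(ψ(a))` with `w ≠ a`; such a path
appears in `ψ(u)` with coefficient the product of the corresponding coefficients
`w^*(ψ(a))`.  As a consequence, `ψ(u) − u` is a linear combination of paths derived of
`u`, and `u^*(ψ(u)) = 1`. -/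
theorem stmt_9 (Q : Quiv) [Fintype Q.V] [Fintype Q.A]
    (k : Type) [Field k] [IsAlgClosed k]
    (hnc : Q.NoCycle) (hnm : Q.NoMultipleArrows)
    (ψ : Module.End k (List Q.A →₀ k)) (hψ : MemT Q k ψ)
    (u : List Q.A) (hu : Q.IsPath u) :
    (∀ p : List Q.A, p ∈ (ψ (Finsupp.single u (1 : k))).support ↔
      ∃ c : k, ReplExp Q k (fun a => ψ (Finsupp.single [a] 1)) u p c) ∧
    (∀ (p : List Q.A) (c : k),
      ReplExp Q k (fun a => ψ (Finsupp.single [a] 1)) u p c →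
      (ψ (Finsupp.single u (1 : k))) p = c) ∧
    (∀ p ∈ (ψ (Finsupp.single u (1 : k)) - Finsupp.single u 1).support, Q.Derived u p) ∧
    (ψ (Finsupp.single u (1 : k))) u = 1 := by
  obtain ⟨L, hLb, hψeq⟩ := hψ
  obtain ⟨⟨Φ, hΦ⟩, hgs0, hg20⟩ := memT_main Q k hnm L hLb
  have heq0 := prod_single_eq_Pg Q k L Φ hΦ
  have hgs : ∀ a : Q.A, ∀ w ∈ (ψ (Finsupp.single [a] (1:k))).support,
      w ≠ [] ∧ w.Chain' (Cmp Q) ∧ Q.src w = some (Q.s a) ∧ Q.tgt w = some (Q.t a) := by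
    rw [hψeq]; exact hgs0
  have hg2 : ∀ a : Q.A, ψ (Finsupp.single [a] (1:k)) [a] = 1 := by
    rw [hψeq]; exact hg20
  have heq : ∀ w : List Q.A, ψ (Finsupp.single w (1:k))
      = (Pg Q k (fun a => toMA Q k (ψ (Finsupp.single [a] 1))) w).coeff := by
    rw [hψeq]; exact heq0
  have key : ∀ (p : List Q.A) (c : k),
      ReplExp Q k (fun a => ψ (Finsupp.single [a] 1)) u p c →
      (ψ (Finsupp.single u (1:k))) p = c ∧ c ≠ 0 := by
    intro p c hre
    rw [heq u]
    exact Pg_replExp Q k hnc (fun a => toMA Q k (ψ (Finsupp.single [a] 1))) hgs hg2 hre hu.2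
  refine ⟨?_, fun p c hre => (key p c hre).1, ?_, ?_⟩
  · intro p
    constructor
    · intro hp
      rw [heq u] at hp
      exact Pg_support Q k _ u p hp
    · rintro ⟨c, hre⟩
      obtain ⟨h1, h2⟩ := key p c hre
      rw [Finsupp.mem_support_iff, h1]
      exact h2
  · intro p hp
    rw [Finsupp.mem_support_iff, Finsupp.sub_apply] at hp
    by_cases hpu : p = u
    · exfalso
      subst hpu
      apply hp
      rw [(key p 1 (ReplExp_self Q k _ p)).1, Finsupp.single_eq_same, sub_self]
    · have h0 : (Finsupp.single u (1:k)) p = 0 :=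
        Finsupp.single_eq_of_ne (fun h => hpu h)
      have hne : (ψ (Finsupp.single u (1:k))) p ≠ 0 := by
        rw [h0, sub_zero] at hp; exact hp
      have hmem : p ∈ (ψ (Finsupp.single u (1:k))).support := Finsupp.mem_support_iff.mpr hne
      rw [heq u] at hmem
      obtain ⟨c, hre⟩ := Pg_support Q k _ u p hmem
      rcases ReplExp_derived Q k _ hgs hre with h | h
      · exact absurd h hpu
      · exact h
  · exact (key u 1 (ReplExp_self Q k _ u)).1

end Quiv
end
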